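/- arXiv:2406.18670 — 2 statements merged into one kernel-verified Lean document; each statement's English description precedes it below -/
import Mathlib

section
/- Primal rounding sandwich (first half of the paper's Theorem relating maxq, fevc, ν, ν°): under the conic assumptions, suppose α ≥ 0 is such that for every Y ∈ A with diag(Y) = 1 there exists a probability vector p ∈ R_+^{F(A)} (i.e., ∑_{U∈F(A)} p_U = 1) with ∑_{U∈F(A)} p_U s_U s_Uᵀ − αY ∈ lift. Then for every W ∈ K, α·ν(W) ≤ maxq(W) ≤ ν(W). -/
open Matrix Finset

noncomputable section

/-- The trace inner product `⟨X,Y⟩ = tr(XY)` on symmetric matrices. -/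
def ip {n : ℕ} (X Y : Matrix (Fin n) (Fin n) ℝ) : ℝ := (X * Y).trace

/-- The signed incidence vector `s_U ∈ {±1}ⁿ` of `U ⊆ [n]`. -/
def sgn {n : ℕ} (U : Finset (Fin n)) : Fin n → ℝ := fun i => if i ∈ U then 1 else -1

/-- The rank-one sign matrix `s_U s_Uᵀ`. -/
def stensor {n : ℕ} (U : Finset (Fin n)) : Matrix (Fin n) (Fin n) ℝ :=
  fun i j => sgn U i * sgn U j

/-- The quadratic form `vᵀ W v`. -/
def qform {n : ℕ} (W : Matrix (Fin n) (Fin n) ℝ) (v : Fin n → ℝ) : ℝ :=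
  ∑ i, ∑ j, v i * W i j * v j

/-- The dual cone (within the space `Sym(n)` of symmetric matrices) of a set `S ⊆ Sym(n)`. -/
def dualSet {n : ℕ} (S : Set (Matrix (Fin n) (Fin n) ℝ)) : Set (Matrix (Fin n) (Fin n) ℝ) :=
  {X | X.IsSymm ∧ ∀ Y ∈ S, 0 ≤ ip X Y}

/-- The data of the conic framework: closed convex cones `A`, `K̂` of symmetric matrices,
and a linear map `L`. -/
structure ConicSetting (n k : ℕ) where
  A : Set (Matrix (Fin n) (Fin n) ℝ)
  Khat : Set (Matrix (Fin n) (Fin n) ℝ)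
  L : Matrix (Fin n) (Fin n) ℝ →ₗ[ℝ] (Fin k → ℝ)
  A_symm : ∀ X ∈ A, X.IsSymm
  A_closed : IsClosed A
  A_smul : ∀ c : ℝ, 0 ≤ c → ∀ X ∈ A, c • X ∈ A
  A_add : ∀ X ∈ A, ∀ Y ∈ A, X + Y ∈ A
  Khat_symm : ∀ X ∈ Khat, X.IsSymm
  Khat_closed : IsClosed Khat
  Khat_smul : ∀ c : ℝ, 0 ≤ c → ∀ X ∈ Khat, c • X ∈ Khat
  Khat_add : ∀ X ∈ Khat, ∀ Y ∈ Khat, X + Y ∈ Khat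

namespace ConicSetting

variable {n k : ℕ} (S : ConicSetting n k)

/-- `K := K̂ ∩ ker L`. -/
def K : Set (Matrix (Fin n) (Fin n) ℝ) := {X | X ∈ S.Khat ∧ S.L X = 0}

/-- `F(A) := {U ⊆ [n] : s_U s_Uᵀ ∈ A}`. -/
def FA : Set (Finset (Fin n)) := {U | stensor U ∈ S.A}

/-- The range of the adjoint of `L` restricted to `Sym(n)`, i.e. the orthogonal complement
of `ker L ∩ Sym(n)` inside `Sym(n)`. -/
def rangeLstar : Set (Matrix (Fin n) (Fin n) ℝ) :=
  {Q | Q.IsSymm ∧ ∀ Y : Matrix (Fin n) (Fin n) ℝ, Y.IsSymm → S.L Y = 0 → ip Q Y = 0}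

/-- `lift := K̂* + range(L*)`. -/
def lift : Set (Matrix (Fin n) (Fin n) ℝ) :=
  {X | ∃ P ∈ dualSet S.Khat, ∃ Q ∈ S.rangeLstar, X = P + Q}

/-- `K* := {X ∈ ker L : ⟨X,Y⟩ ≥ 0 for all Y ∈ K}` (within `Sym(n)`). -/
def Kstar : Set (Matrix (Fin n) (Fin n) ℝ) :=
  {X | X.IsSymm ∧ S.L X = 0 ∧ ∀ Y ∈ S.K, 0 ≤ ip X Y}

/-- The convex cone generated by `CUT^A = conv{s_U s_Uᵀ : U ∈ F(A)}`. -/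
def coneCUT : Set (Matrix (Fin n) (Fin n) ℝ) :=
  {X | ∃ y : Finset (Fin n) → ℝ, (∀ U, 0 ≤ y U) ∧ (∀ U, U ∉ S.FA → y U = 0) ∧
    X = ∑ U : Finset (Fin n), y U • stensor U}

/-- The conic assumptions: `A ⊆ PSD(n)`, `K ⊆ A*`, `cone(CUT^A)` has nonempty interior in
`Sym(n)`, and `K̂` has a nonzero Slater point in `ker L` (interior taken in `Sym(n)`). -/
structure Assumptions : Prop where
  A_psd : ∀ X ∈ S.A, X.PosSemidef
  K_sub_Astar : S.K ⊆ dualSet S.A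
  cut_interior : (interior {X : {M : Matrix (Fin n) (Fin n) ℝ // M.IsSymm} |
      (X : Matrix (Fin n) (Fin n) ℝ) ∈ S.coneCUT}).Nonempty
  Khat_slater : ∃ X : {M : Matrix (Fin n) (Fin n) ℝ // M.IsSymm},
      (X : Matrix (Fin n) (Fin n) ℝ) ≠ 0 ∧
      X ∈ interior {M : {M : Matrix (Fin n) (Fin n) ℝ // M.IsSymm} |
        (M : Matrix (Fin n) (Fin n) ℝ) ∈ S.Khat} ∧
      S.L X = 0

/-- `maxq(W) := max{s_Uᵀ W s_U : U ∈ F(A)}`. -/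
def maxq (W : Matrix (Fin n) (Fin n) ℝ) : ℝ :=
  sSup {r | ∃ U ∈ S.FA, r = qform W (sgn U)}

/-- `ν(W) := max{⟨W,Y⟩ : Y ∈ A, diag(Y) = 1}`. -/
def nu (W : Matrix (Fin n) (Fin n) ℝ) : ℝ :=
  sSup {r | ∃ Y ∈ S.A, (∀ i, Y i i = 1) ∧ r = ip W Y}

/-- `y ∈ ℝ₊^{F(A)}` is a tensor sign cover for `Z`:
`∑_{U ∈ F(A)} y_U s_U s_Uᵀ ⪰_lift Z`. -/
def CoverFeas (Z : Matrix (Fin n) (Fin n) ℝ) (y : Finset (Fin n) → ℝ) : Prop :=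
  (∀ U, 0 ≤ y U) ∧ (∀ U, U ∉ S.FA → y U = 0) ∧
  (∑ U : Finset (Fin n), y U • stensor U) - Z ∈ S.lift

/-- `fevc(Z)`: minimum total weight of a tensor sign cover of `Z`. -/
def fevc (Z : Matrix (Fin n) (Fin n) ℝ) : ℝ :=
  sInf {r | ∃ y, S.CoverFeas Z y ∧ r = ∑ U : Finset (Fin n), y U}

/-- `ν°(Z) := inf{μ ≥ 0 : ∃ Y ∈ A, diag(Y) = μ·1, Y ⪰_lift Z}`. -/
def nuPolar (Z : Matrix (Fin n) (Fin n) ℝ) : ℝ :=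
  sInf {μ | 0 ≤ μ ∧ ∃ Y ∈ S.A, (∀ i, Y i i = μ) ∧ Y - Z ∈ S.lift}

end ConicSetting

/-!
Rounding any feasible `Y` of `ν(W)` into a probability distribution over cut matrices
`s_U s_Uᵀ` with `∑ p_U s_U s_Uᵀ ⪰_lift αY`, and pairing with `W ∈ K` (which is nonnegative on
`lift`), gives `α ⟨W, Y⟩ ≤ ∑ p_U s_Uᵀ W s_U ≤ maxq(W)`. Conversely every `s_U s_Uᵀ` with
`U ∈ F(A)` is feasible for `ν(W)`, and `ν(W)` is a genuine supremum because a PSD matrix with unit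
diagonal has entries in `[-1, 1]`. Since `W ∈ A*`, both `maxq(W)` and `ν(W)` are nonnegative,
which makes the junk value `sSup ∅ = 0` (when `F(A)` is empty) harmless.
-/

lemma Matrix.PosSemidef.apply_mul_self_le {ι : Type*} {Y : Matrix ι ι ℝ} (hY : Y.PosSemidef)
    (i j : ι) : Y i j * Y i j ≤ Y i i * Y j j := by
  have hdet := (hY.submatrix ![i, j]).det_nonneg
  have hsymm : Y j i = Y i j := by simpa using hY.1.apply i j
  simp only [det_fin_two, submatrix_apply, Matrix.cons_val_zero, Matrix.cons_val_one, hsymm] at hdet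
  linarith

lemma Matrix.PosSemidef.abs_apply_le_one {ι : Type*} {Y : Matrix ι ι ℝ} (hY : Y.PosSemidef)
    (hdiag : ∀ i, Y i i = 1) (i j : ι) : |Y i j| ≤ 1 := by
  rw [← sq_le_one_iff_abs_le_one, sq]
  simpa [hdiag] using hY.apply_mul_self_le i j

section TraceInnerProduct

variable {n : ℕ}

lemma ip_comm (X Y : Matrix (Fin n) (Fin n) ℝ) : ip X Y = ip Y X :=
  trace_mul_comm X Y

lemma ip_add_left (X Y W : Matrix (Fin n) (Fin n) ℝ) : ip (X + Y) W = ip X W + ip Y W := by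
  simp [ip, Matrix.add_mul]

lemma ip_sub (W X Y : Matrix (Fin n) (Fin n) ℝ) : ip W (X - Y) = ip W X - ip W Y := by
  simp [ip, Matrix.mul_sub]

lemma ip_smul (W X : Matrix (Fin n) (Fin n) ℝ) (c : ℝ) : ip W (c • X) = c * ip W X := by
  simp [ip]

lemma ip_sum {ι : Type*} (s : Finset ι) (W : Matrix (Fin n) (Fin n) ℝ)
    (X : ι → Matrix (Fin n) (Fin n) ℝ) : ip W (∑ u ∈ s, X u) = ∑ u ∈ s, ip W (X u) := by
  simp [ip, Matrix.mul_sum, trace_sum]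

lemma ip_le_sum_abs {W Y : Matrix (Fin n) (Fin n) ℝ} (hY : ∀ i j, |Y i j| ≤ 1) :
    ip W Y ≤ ∑ i, ∑ j, |W i j| := by
  simp only [ip, trace, diag_apply, mul_apply]
  gcongr with i _ j _
  calc W i j * Y j i ≤ |W i j| * |Y j i| := (le_abs_self _).trans (abs_mul _ _).le
    _ ≤ |W i j| := mul_le_of_le_one_right (abs_nonneg _) (hY j i)

lemma ip_stensor (W : Matrix (Fin n) (Fin n) ℝ) (U : Finset (Fin n)) :
    ip W (stensor U) = qform W (sgn U) := by
  simp only [ip, trace, diag_apply, mul_apply, qform, stensor]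
  exact Finset.sum_congr rfl fun _ _ => Finset.sum_congr rfl fun _ _ => by ring

lemma stensor_apply_self (U : Finset (Fin n)) (i : Fin n) : stensor U i i = 1 := by
  unfold stensor sgn
  split_ifs <;> norm_num

end TraceInnerProduct

namespace ConicSetting

variable {n k : ℕ} (S : ConicSetting n k) {W : Matrix (Fin n) (Fin n) ℝ}

def IsRoundingRatio (α : ℝ) : Prop :=
  ∀ Y ∈ S.A, (∀ i, Y i i = 1) →
    ∃ p : Finset (Fin n) → ℝ, (∀ U, 0 ≤ p U) ∧ (∀ U, U ∉ S.FA → p U = 0) ∧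
      (∑ U : Finset (Fin n), p U) = 1 ∧
      (∑ U : Finset (Fin n), p U • stensor U) - α • Y ∈ S.lift

lemma ip_nonneg_of_mem_lift {D : Matrix (Fin n) (Fin n) ℝ} (hW : W ∈ S.K) (hD : D ∈ S.lift) :
    0 ≤ ip W D := by
  obtain ⟨P, hP, Q, hQ, rfl⟩ := hD
  rw [ip_comm, ip_add_left, hQ.2 W (S.Khat_symm W hW.1) hW.2, add_zero]
  exact hP.2 W hW.1

lemma qform_le_maxq (W : Matrix (Fin n) (Fin n) ℝ) {U : Finset (Fin n)} (hU : U ∈ S.FA) :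
    qform W (sgn U) ≤ S.maxq W := by
  refine le_csSup ((Set.finite_range fun V => qform W (sgn V)).subset ?_).bddAbove ⟨U, hU, rfl⟩
  rintro _ ⟨V, -, rfl⟩
  exact ⟨V, rfl⟩

lemma maxq_nonneg (hW : W ∈ dualSet S.A) : 0 ≤ S.maxq W :=
  Real.sSup_nonneg fun _ ⟨U, hU, hr⟩ => hr ▸ ip_stensor W U ▸ hW.2 _ hU

lemma nu_nonneg (hW : W ∈ dualSet S.A) : 0 ≤ S.nu W :=
  Real.sSup_nonneg fun _ ⟨Y, hY, _, hr⟩ => hr ▸ hW.2 Y hY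

lemma le_nu (hA : ∀ X ∈ S.A, X.PosSemidef) {Y : Matrix (Fin n) (Fin n) ℝ} (hY : Y ∈ S.A)
    (hdiag : ∀ i, Y i i = 1) : ip W Y ≤ S.nu W := by
  refine le_csSup ⟨∑ i, ∑ j, |W i j|, ?_⟩ ⟨Y, hY, hdiag, rfl⟩
  rintro _ ⟨Z, hZ, hZdiag, rfl⟩
  exact ip_le_sum_abs ((hA Z hZ).abs_apply_le_one hZdiag)

theorem maxq_le_nu (hA : ∀ X ∈ S.A, X.PosSemidef) (hW : W ∈ dualSet S.A) :
    S.maxq W ≤ S.nu W :=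
  Real.sSup_le (fun _ ⟨U, hU, hr⟩ => hr ▸ ip_stensor W U ▸
    S.le_nu hA hU (stensor_apply_self U)) (S.nu_nonneg hW)

lemma mul_ip_le_maxq (hW : W ∈ S.K) {α : ℝ} {Y : Matrix (Fin n) (Fin n) ℝ}
    {p : Finset (Fin n) → ℝ} (hp : ∀ U, 0 ≤ p U) (hpFA : ∀ U, U ∉ S.FA → p U = 0)
    (hp1 : ∑ U : Finset (Fin n), p U = 1)
    (hlift : (∑ U : Finset (Fin n), p U • stensor U) - α • Y ∈ S.lift) :
    α * ip W Y ≤ S.maxq W := by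
  have hpair := S.ip_nonneg_of_mem_lift hW hlift
  simp only [ip_sub, ip_sum, ip_smul, ip_stensor, sub_nonneg] at hpair
  calc α * ip W Y ≤ ∑ U, p U * qform W (sgn U) := hpair
    _ ≤ ∑ U, p U * S.maxq W := Finset.sum_le_sum fun U _ => by
        by_cases hU : U ∈ S.FA
        · exact mul_le_mul_of_nonneg_left (S.qform_le_maxq W hU) (hp U)
        · simp [hpFA U hU]
    _ = S.maxq W := by rw [← Finset.sum_mul, hp1, one_mul]

theorem mul_nu_le_maxq {α : ℝ} (hα : 0 ≤ α) (hround : S.IsRoundingRatio α) (hW : W ∈ S.K)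
    (hWA : W ∈ dualSet S.A) : α * S.nu W ≤ S.maxq W := by
  rw [nu, ← smul_eq_mul, ← Real.sSup_smul_of_nonneg hα]
  refine Real.sSup_le ?_ (S.maxq_nonneg hWA)
  rintro _ ⟨_, ⟨Y, hY, hdiag, rfl⟩, rfl⟩
  obtain ⟨p, hp, hpFA, hp1, hlift⟩ := hround Y hY hdiag
  exact S.mul_ip_le_maxq hW hp hpFA hp1 hlift

end ConicSetting

theorem primal_rounding_sandwich_general {n k : ℕ} (S : ConicSetting n k)
    (hS : S.Assumptions) (α : ℝ) (hα : 0 ≤ α)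
    (hround : ∀ Y ∈ S.A, (∀ i, Y i i = 1) →
      ∃ p : Finset (Fin n) → ℝ, (∀ U, 0 ≤ p U) ∧ (∀ U, U ∉ S.FA → p U = 0) ∧
        (∑ U : Finset (Fin n), p U) = 1 ∧
        (∑ U : Finset (Fin n), p U • stensor U) - α • Y ∈ S.lift) :
    ∀ W ∈ S.K, α * S.nu W ≤ S.maxq W ∧ S.maxq W ≤ S.nu W := fun _ hW =>
  have hWA := hS.K_sub_Astar hW
  ⟨S.mul_nu_le_maxq hα hround hW hWA, S.maxq_le_nu hS.A_psd hWA⟩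

/-- primal rounding sandwich: under the conic assumptions, if `α ≥ 0`
is such that every `Y ∈ A` with unit diagonal admits a probability vector
`p ∈ ℝ₊^{F(A)}` with `∑_U p_U s_U s_Uᵀ − αY ∈ lift`, then `α·ν(W) ≤ maxq(W) ≤ ν(W)` for
every `W ∈ K`. -/
theorem primal_rounding_sandwich {n k : ℕ} (hn : 1 ≤ n) (S : ConicSetting n k)
    (hS : S.Assumptions) (α : ℝ) (hα : 0 ≤ α)
    (hround : ∀ Y ∈ S.A, (∀ i, Y i i = 1) →
      ∃ p : Finset (Fin n) → ℝ, (∀ U, 0 ≤ p U) ∧ (∀ U, U ∉ S.FA → p U = 0) ∧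
        (∑ U : Finset (Fin n), p U) = 1 ∧
        (∑ U : Finset (Fin n), p U • stensor U) - α • Y ∈ S.lift) :
    ∀ W ∈ S.K, α * S.nu W ≤ S.maxq W ∧ S.maxq W ≤ S.nu W :=
  primal_rounding_sandwich_general S hS α hα hround
end
end

section
/- Perturbed weak duality: under the conic assumptions, let ε ∈ [0,1). Suppose W ∈ K, ρ ≥ 0, and x ∈ R^n satisfy Diag(x) − W ∈ A* and ρ ≥ (1−ε)·1ᵀx + ε·tr(W), and suppose μ ≥ 0, Y ∈ Sym(n), and Z ∈ Sym(n) satisfy Y − εμI ∈ A, diag(Y) = μ·1, and Y ⪰_lift Z. Then ⟨W,Z⟩ ≤ ρμ. -/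
open Matrix Finset

noncomputable section

/-- perturbed weak duality: under the conic assumptions, let
`ε ∈ [0,1)`. If `W ∈ K`, `ρ ≥ 0`, `x ∈ ℝⁿ` satisfy `Diag(x) − W ∈ A*` and
`ρ ≥ (1−ε)·1ᵀx + ε·tr(W)`, and `μ ≥ 0`, `Y`, `Z` satisfy `Y − εμI ∈ A`,
`diag(Y) = μ·1`, `Y ⪰_lift Z`, then `⟨W,Z⟩ ≤ ρμ`. -/
theorem perturbed_weak_duality {n k : ℕ} (hn : 1 ≤ n) (S : ConicSetting n k)
    (hS : S.Assumptions) (ε : ℝ) (hε0 : 0 ≤ ε) (hε1 : ε < 1)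
    (W : Matrix (Fin n) (Fin n) ℝ) (hW : W ∈ S.K)
    (ρ : ℝ) (hρ : 0 ≤ ρ) (x : Fin n → ℝ)
    (hxW : Matrix.diagonal x - W ∈ dualSet S.A)
    (hρx : (1 - ε) * (∑ i, x i) + ε * W.trace ≤ ρ)
    (μ : ℝ) (hμ : 0 ≤ μ) (Y Z : Matrix (Fin n) (Fin n) ℝ)
    (hYA : Y - (ε * μ) • (1 : Matrix (Fin n) (Fin n) ℝ) ∈ S.A)
    (hYdiag : ∀ i, Y i i = μ) (hYZ : Y - Z ∈ S.lift) :
    ip W Z ≤ ρ * μ := by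
  obtain ⟨P, hP, Q, hQ, hPQ⟩ := hYZ
  obtain ⟨hWK, hWL⟩ := hW
  have hWsymm : W.IsSymm := S.Khat_symm W hWK
  have hipcomm : ∀ A B : Matrix (Fin n) (Fin n) ℝ, ip A B = ip B A := by
    intro A B; exact Matrix.trace_mul_comm A B
  -- ip W (Y - Z) ≥ 0
  have h1 : ip W Z ≤ ip W Y := by
    have hP' : 0 ≤ ip W P := by
      rw [hipcomm]; exact hP.2 W hWK
    have hQ' : ip W Q = 0 := by
      rw [hipcomm]; exact hQ.2 W hWsymm hWL
    have : 0 ≤ ip W (Y - Z) := by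
      rw [hPQ]
      simp only [ip, Matrix.mul_add, Matrix.trace_add]
      have := hP'
      simp only [ip] at this hQ'
      linarith
    simp only [ip, Matrix.mul_sub, Matrix.trace_sub] at this
    simp only [ip]; linarith
  -- key inequality with A*
  have h2 : 0 ≤ ip (Matrix.diagonal x - W) (Y - (ε * μ) • (1 : Matrix (Fin n) (Fin n) ℝ)) :=
    hxW.2 _ hYA
  have hdiag : ip (Matrix.diagonal x)
      (Y - (ε * μ) • (1 : Matrix (Fin n) (Fin n) ℝ)) = (μ - ε * μ) * ∑ i, x i := by
    simp only [ip, Matrix.trace, Matrix.diag, Matrix.diagonal_mul, Matrix.sub_apply,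
      Matrix.smul_apply, Matrix.one_apply_eq, smul_eq_mul, mul_one, hYdiag]
    rw [Finset.mul_sum]
    exact Finset.sum_congr rfl (fun i _ => by ring)
  have hWone : ip W ((ε * μ) • (1 : Matrix (Fin n) (Fin n) ℝ)) = ε * μ * W.trace := by
    simp [ip, Matrix.mul_smul, Matrix.trace_smul]
  have h3 : ip W Y ≤ (μ - ε * μ) * ∑ i, x i + ε * μ * W.trace := by
    simp only [ip, Matrix.sub_mul, Matrix.mul_sub, Matrix.trace_sub] at h2 hdiag ⊢
    simp only [ip] at hWone
    linarith
  have h4 : (μ - ε * μ) * ∑ i, x i + ε * μ * W.trace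
      = μ * ((1 - ε) * (∑ i, x i) + ε * W.trace) := by ring
  calc ip W Z ≤ ip W Y := h1
    _ ≤ μ * ((1 - ε) * (∑ i, x i) + ε * W.trace) := by rw [← h4]; exact h3
    _ ≤ μ * ρ := by exact mul_le_mul_of_nonneg_left hρx hμ
    _ = ρ * μ := mul_comm _ _
end
end
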